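/- (Existence and uniqueness of the Stackelberg equilibrium.) Suppose 0 < p_m ≤ p_c ≤ e·p_m ≤ p_s, and for each i ∈ I suppose b1^i = (e − 1)/(q·F^i·η^i) and p_c·(q·F^i·η^i/(e − 1)) ≤ k1^i ≤ p_m·(e·q·F^i·η^i/(e − 1)). Then there exists exactly one pair (p*, (β*^i)_{i∈I}) with p* ∈ [p_m, p_c] and β*^i ∈ [0,1] for all i, such that: (a) for each i ∈ I, β*^i maximizes β ↦ U^i(p*, β) over [0,1]; and (b) p* maximizes the anticipated profit L̃ over [p_m, p_c]. Moreover at this equilibrium β*^i = (1/(q·F^i·η^i))·(k1^i/p* − 1/b1^i). -/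

import Mathlib

open Real Set

/-- Utility of CCHP `i` at bid `p` and partition coefficient `β`. -/
noncomputable def cchpU (q F η k1 b1 c p β : ℝ) : ℝ :=
  k1 * Real.log (1 + b1 * q * F * η * β) + c + p * q * F * η * (1 - β)

/-- The APG's anticipated profit under CCHP best responses. -/
noncomputable def apgProfit {ι : Type*} [Fintype ι] (q : ℝ) (F η k1 b1 : ι → ℝ)
    (p_s p_c R : ℝ) (p : ℝ) : ℝ :=
  (p_c - p) * ∑ i, (q * F i * η i - (k1 i / p - 1 / b1 i)) + (p_s - p_c) * R

/-!
In `t = 1 + b1·q·F·η·β` the utility of a CCHP is `k1·log t − (p/b1)·t + const`, which by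
`log x < x − 1` is uniquely maximised at `t = k1·b1/p`; the bounds on `k1` place the
corresponding `β` in `[0, 1]` for every bid `p ∈ [p_m, p_c]`. The anticipated profit equals
`const − (S·p + p_c·K/p)` with `K = Σ k1 > 0`, a strictly concave function of `p > 0`, so it has
exactly one maximiser on the compact interval `[p_m, p_c]`.
-/

theorem StrictConcaveOn.existsUnique_isMaxOn {E : Type*} [TopologicalSpace E] [AddCommGroup E]
    [Module ℝ E] {s : Set E} {f : E → ℝ}
    (hf : StrictConcaveOn ℝ s f) (hfc : ContinuousOn f s) (hs : IsCompact s)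
    (hne : s.Nonempty) : ∃! x, x ∈ s ∧ IsMaxOn f s x := by
  obtain ⟨x, hx, hmax⟩ := hs.exists_isMaxOn hne hfc
  exact ⟨x, ⟨hx, hmax⟩, fun y ⟨hy, hymax⟩ => hf.eq_of_isMaxOn hymax hmax hy hx⟩

theorem strictConvexOn_mul_add_div (S : ℝ) {C : ℝ} (hC : 0 < C) :
    StrictConvexOn ℝ (Ioi 0) fun x => S * x + C / x := by
  refine ⟨convex_Ioi 0, fun x hx y hy hxy a b ha hb hab => ?_⟩
  have hinv := (strictConvexOn_zpow (m := -1) (by norm_num) (by norm_num)).2 hx hy hxy ha hb hab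
  simp only [smul_eq_mul, zpow_neg_one] at hinv ⊢
  simp only [div_eq_mul_inv]
  nlinarith [mul_lt_mul_of_pos_left hinv hC]

theorem mul_log_sub_mul_lt_of_ne {k m t t₀ : ℝ} (hk : 0 < k) (ht : 0 < t) (ht₀ : 0 < t₀)
    (hm : m * t₀ = k) (hne : t ≠ t₀) : k * log t - m * t < k * log t₀ - m * t₀ := by
  have hlog : log (t / t₀) < t / t₀ - 1 :=
    log_lt_sub_one_of_pos (div_pos ht ht₀) (by rwa [Ne, div_eq_one_iff_eq ht₀.ne'])
  rw [log_div ht.ne' ht₀.ne'] at hlog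
  have : k * (t / t₀ - 1) = m * t - m * t₀ := by rw [← hm]; field_simp
  nlinarith [mul_lt_mul_of_pos_left hlog hk]

section Stackelberg

variable {ι α β : Type*}

def IsStackelbergEquilibrium (U : ι → α → β → ℝ) (L : α → ℝ) (P : Set α) (B : Set β)
    (s : α × (ι → β)) : Prop :=
  s.1 ∈ P ∧ (∀ i, s.2 i ∈ B) ∧ (∀ i, ∀ b ∈ B, U i s.1 b ≤ U i s.1 (s.2 i)) ∧
    ∀ p ∈ P, L p ≤ L s.1

theorem isStackelbergEquilibrium_iff {U : ι → α → β → ℝ} {L : α → ℝ} {P : Set α} {B : Set β}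
    {p₀ : α} {br : α → ι → β} (hp₀ : p₀ ∈ P) (hL : ∀ p ∈ P, IsMaxOn L P p ↔ p = p₀)
    (hbr : ∀ i, br p₀ i ∈ B) (hU : ∀ p ∈ P, ∀ i, ∀ b ∈ B, IsMaxOn (U i p) B b ↔ b = br p i)
    {s : α × (ι → β)} : IsStackelbergEquilibrium U L P B s ↔ s = (p₀, br p₀) := by
  constructor
  · rintro ⟨hp, hb, hUmax, hLmax⟩
    have hs₁ : s.1 = p₀ := (hL s.1 hp).1 (isMaxOn_iff.2 hLmax)
    refine Prod.ext hs₁ (funext fun i => ?_)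
    rw [← hs₁]
    exact (hU s.1 hp i (s.2 i) (hb i)).1 (isMaxOn_iff.2 (hUmax i))
  · rintro rfl
    exact ⟨hp₀, hbr, fun i => isMaxOn_iff.1 (((hU p₀ hp₀ i _ (hbr i)).2 rfl)),
      isMaxOn_iff.1 ((hL p₀ hp₀).2 rfl)⟩

end Stackelberg

noncomputable def cchpBestResponse (q F η k1 b1 p : ℝ) : ℝ :=
  1 / (q * F * η) * (k1 / p - 1 / b1)

theorem cchpU_eq {q F η k1 b1 c p β : ℝ} (hb1 : b1 ≠ 0) :
    cchpU q F η k1 b1 c p β = k1 * log (1 + b1 * (q * F * η) * β)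
      - p / b1 * (1 + b1 * (q * F * η) * β) + (c + p * (q * F * η) + p / b1) := by
  unfold cchpU
  field_simp
  ring_nf

theorem one_add_mul_cchpBestResponse {q F η k1 b1 p : ℝ} (ha : q * F * η ≠ 0) (hb1 : b1 ≠ 0)
    (hp : p ≠ 0) : 1 + b1 * (q * F * η) * cchpBestResponse q F η k1 b1 p = k1 * b1 / p := by
  unfold cchpBestResponse
  generalize q * F * η = a at *
  field_simp
  ring

theorem cchpU_lt_cchpU_bestResponse {q F η k1 b1 c p β : ℝ} (ha : 0 < q * F * η)
    (hk1 : 0 < k1) (hb1 : 0 < b1) (hp : 0 < p) (hβ : 0 ≤ β)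
    (hne : β ≠ cchpBestResponse q F η k1 b1 p) :
    cchpU q F η k1 b1 c p β < cchpU q F η k1 b1 c p (cchpBestResponse q F η k1 b1 p) := by
  rw [cchpU_eq hb1.ne', cchpU_eq hb1.ne', one_add_mul_cchpBestResponse ha.ne' hb1.ne' hp.ne']
  have hne' : 1 + b1 * (q * F * η) * β ≠ k1 * b1 / p := by
    rw [← one_add_mul_cchpBestResponse ha.ne' hb1.ne' hp.ne']
    intro h
    exact hne (mul_left_cancel₀ (by positivity) (add_left_cancel h))
  have := mul_log_sub_mul_lt_of_ne hk1 (by positivity) (by positivity)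
    (by field_simp) hne' (m := p / b1)
  linarith

theorem isMaxOn_cchpU_iff {q F η k1 b1 c p β : ℝ} (ha : 0 < q * F * η) (hk1 : 0 < k1)
    (hb1 : 0 < b1) (hp : 0 < p) (hbr : cchpBestResponse q F η k1 b1 p ∈ Icc 0 1)
    (hβ : β ∈ Icc 0 1) :
    IsMaxOn (cchpU q F η k1 b1 c p) (Icc 0 1) β ↔ β = cchpBestResponse q F η k1 b1 p := by
  constructor
  · intro hmax
    by_contra hne
    exact (isMaxOn_iff.1 hmax _ hbr).not_gt (cchpU_lt_cchpU_bestResponse ha hk1 hb1 hp hβ.1 hne)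
  · rintro rfl
    refine isMaxOn_iff.2 fun x hx => ?_
    rcases eq_or_ne x (cchpBestResponse q F η k1 b1 p) with rfl | hne
    · exact le_rfl
    · exact (cchpU_lt_cchpU_bestResponse ha hk1 hb1 hp hx.1 hne).le

theorem cchpBestResponse_mem_Icc {q F η k1 b1 κ p_m p_c p : ℝ} (hκ : 1 < κ)
    (ha : 0 < q * F * η) (hb1 : b1 = (κ - 1) / (q * F * η))
    (hlo : p_c * (q * F * η / (κ - 1)) ≤ k1) (hhi : k1 ≤ p_m * (κ * q * F * η / (κ - 1)))
    (hpm : 0 < p_m) (hp : p ∈ Icc p_m p_c) :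
    cchpBestResponse q F η k1 b1 p ∈ Icc 0 1 := by
  have hp₀ : 0 < p := hpm.trans_le hp.1
  have hκ₁ : 0 < κ - 1 := sub_pos.2 hκ
  have heq : cchpBestResponse q F η k1 b1 p
      = (k1 * (κ - 1) - p * (q * F * η)) / (p * (q * F * η) * (κ - 1)) := by
    unfold cchpBestResponse
    rw [hb1]
    generalize q * F * η = a at *
    field_simp
  rw [mul_assoc κ, mul_assoc κ] at hhi
  generalize q * F * η = a at *
  rw [heq, mem_Icc, le_div_iff₀ (by positivity), div_le_one (by positivity)]
  rw [mul_div_assoc', div_le_iff₀ hκ₁] at hlo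
  rw [mul_div_assoc', le_div_iff₀ hκ₁] at hhi
  have hlow : p * a ≤ p_c * a := mul_le_mul_of_nonneg_right hp.2 ha.le
  have hhigh : p_m * (κ * a) ≤ p * (κ * a) := mul_le_mul_of_nonneg_right hp.1 (by positivity)
  constructor <;> linarith

section Profit

variable {ι : Type*} [Fintype ι] (q : ℝ) (F η k1 b1 : ι → ℝ) (p_s p_c R : ℝ)

theorem apgProfit_eq {p : ℝ} (hp : p ≠ 0) :
    apgProfit q F η k1 b1 p_s p_c R p
      = p_c * ∑ i, (q * F i * η i + 1 / b1 i) + ∑ i, k1 i + (p_s - p_c) * R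
        - ((∑ i, (q * F i * η i + 1 / b1 i)) * p + p_c * (∑ i, k1 i) / p) := by
  have hsum : ∑ i, (q * F i * η i - (k1 i / p - 1 / b1 i))
      = ∑ i, (q * F i * η i + 1 / b1 i) - (∑ i, k1 i) / p := by
    rw [Finset.sum_div, ← Finset.sum_sub_distrib]
    exact Finset.sum_congr rfl fun i _ => by ring
  rw [apgProfit, hsum]
  field_simp
  ring

theorem continuousOn_apgProfit : ContinuousOn (apgProfit q F η k1 b1 p_s p_c R) (Ioi 0) := by
  unfold apgProfit
  fun_prop (disch := exact fun x hx => ne_of_gt hx)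

theorem strictConcaveOn_apgProfit [Nonempty ι] (hpc : 0 < p_c) (hk1 : ∀ i, 0 < k1 i) :
    StrictConcaveOn ℝ (Ioi 0) (apgProfit q F η k1 b1 p_s p_c R) := by
  have hC : 0 < p_c * ∑ i, k1 i :=
    mul_pos hpc (Finset.sum_pos (fun i _ => hk1 i) Finset.univ_nonempty)
  exact ((concaveOn_const _ (convex_Ioi 0)).sub_strictConvexOn
    (strictConvexOn_mul_add_div _ hC)).congr fun p hp =>
      (apgProfit_eq q F η k1 b1 p_s p_c R hp.ne').symm

end Profit

theorem stmt_10_general {ι : Type*} [Fintype ι] [Nonempty ι]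
    (q : ℝ) (hq : 0 < q) (F η k1 b1 c : ι → ℝ)
    (hF : ∀ i, 0 < F i) (hη : ∀ i, 0 < η i)
    (hk1pos : ∀ i, 0 < k1 i) (hb1pos : ∀ i, 0 < b1 i)
    (p_m p_c p_s : ℝ) (R : ℝ)
    (hpm : 0 < p_m) (hmc : p_m ≤ p_c)
    (hb1 : ∀ i, b1 i = (Real.exp 1 - 1) / (q * F i * η i))
    (hk1lo : ∀ i, p_c * (q * F i * η i / (Real.exp 1 - 1)) ≤ k1 i)
    (hk1hi : ∀ i, k1 i ≤ p_m * (Real.exp 1 * q * F i * η i / (Real.exp 1 - 1))) :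
    (∃! s : ℝ × (ι → ℝ),
      s.1 ∈ Icc p_m p_c ∧ (∀ i, s.2 i ∈ Icc (0:ℝ) 1) ∧
      (∀ i, ∀ β ∈ Icc (0:ℝ) 1,
        cchpU q (F i) (η i) (k1 i) (b1 i) (c i) s.1 β
          ≤ cchpU q (F i) (η i) (k1 i) (b1 i) (c i) s.1 (s.2 i)) ∧
      (∀ p ∈ Icc p_m p_c,
        apgProfit q F η k1 b1 p_s p_c R p ≤ apgProfit q F η k1 b1 p_s p_c R s.1)) ∧
    (∀ s : ℝ × (ι → ℝ),
      (s.1 ∈ Icc p_m p_c ∧ (∀ i, s.2 i ∈ Icc (0:ℝ) 1) ∧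
        (∀ i, ∀ β ∈ Icc (0:ℝ) 1,
          cchpU q (F i) (η i) (k1 i) (b1 i) (c i) s.1 β
            ≤ cchpU q (F i) (η i) (k1 i) (b1 i) (c i) s.1 (s.2 i)) ∧
        (∀ p ∈ Icc p_m p_c,
          apgProfit q F η k1 b1 p_s p_c R p ≤ apgProfit q F η k1 b1 p_s p_c R s.1)) →
      ∀ i, s.2 i = (1 / (q * F i * η i)) * (k1 i / s.1 - 1 / b1 i)) := by
  have ha : ∀ i, 0 < q * F i * η i := fun i => mul_pos (mul_pos hq (hF i)) (hη i)
  have hP : Icc p_m p_c ⊆ Ioi 0 := fun p hp => hpm.trans_le hp.1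
  obtain ⟨p₀, ⟨hp₀, hmax₀⟩, huniq⟩ :=
    ((strictConcaveOn_apgProfit q F η k1 b1 p_s p_c R (hpm.trans_le hmc) hk1pos).subset hP
      (convex_Icc _ _)).existsUnique_isMaxOn
      ((continuousOn_apgProfit q F η k1 b1 p_s p_c R).mono hP) isCompact_Icc (nonempty_Icc.2 hmc)
  have hbr : ∀ p ∈ Icc p_m p_c, ∀ i,
      cchpBestResponse q (F i) (η i) (k1 i) (b1 i) p ∈ Icc 0 1 := fun p hp i =>
    cchpBestResponse_mem_Icc (one_lt_exp_iff.2 one_pos) (ha i) (hb1 i) (hk1lo i) (hk1hi i) hpm hp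
  have hequil (s : ℝ × (ι → ℝ)) :=
    isStackelbergEquilibrium_iff (U := fun i => cchpU q (F i) (η i) (k1 i) (b1 i) (c i))
      (s := s) hp₀ (fun p hp => ⟨fun h => huniq p ⟨hp, h⟩, fun h => h ▸ hmax₀⟩)
      (hbr p₀ hp₀) fun p hp i b hb =>
        isMaxOn_cchpU_iff (ha i) (hk1pos i) (hb1pos i) (hpm.trans_le hp.1) (hbr p hp i) hb
  -- Both conjuncts of the goal are about `IsStackelbergEquilibrium` unfolded.
  refine ⟨⟨_, (hequil _).2 rfl, fun s hs => (hequil s).1 hs⟩, fun s hs i => ?_⟩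
  obtain rfl := (hequil s).1 hs
  rfl

/-- Existence and uniqueness of the Stackelberg equilibrium: under the stated
parameter restrictions there is exactly one pair `(p*, β*)` with
`p* ∈ [p_m, p_c]` and `β*^i ∈ [0,1]`, such that each `β*^i` maximizes
`U^i(p*, ·)` on `[0,1]` and `p*` maximizes the anticipated profit `L̃` on
`[p_m, p_c]`; moreover, at this equilibrium
`β*^i = (1/(q·F^i·η^i))·(k1^i/p* − 1/b1^i)`. -/
theorem stmt_10 {ι : Type*} [Fintype ι] [Nonempty ι]
    (q : ℝ) (hq : 0 < q) (F η k1 b1 c : ι → ℝ)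
    (hF : ∀ i, 0 < F i) (hη : ∀ i, 0 < η i)
    (hk1pos : ∀ i, 0 < k1 i) (hb1pos : ∀ i, 0 < b1 i)
    (p_m p_c p_s : ℝ) (R : ℝ)
    (hpm : 0 < p_m) (hmc : p_m ≤ p_c) (hce : p_c ≤ Real.exp 1 * p_m)
    (hes : Real.exp 1 * p_m ≤ p_s)
    (hb1 : ∀ i, b1 i = (Real.exp 1 - 1) / (q * F i * η i))
    (hk1lo : ∀ i, p_c * (q * F i * η i / (Real.exp 1 - 1)) ≤ k1 i)
    (hk1hi : ∀ i, k1 i ≤ p_m * (Real.exp 1 * q * F i * η i / (Real.exp 1 - 1))) :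
    (∃! s : ℝ × (ι → ℝ),
      s.1 ∈ Icc p_m p_c ∧ (∀ i, s.2 i ∈ Icc (0:ℝ) 1) ∧
      (∀ i, ∀ β ∈ Icc (0:ℝ) 1,
        cchpU q (F i) (η i) (k1 i) (b1 i) (c i) s.1 β
          ≤ cchpU q (F i) (η i) (k1 i) (b1 i) (c i) s.1 (s.2 i)) ∧
      (∀ p ∈ Icc p_m p_c,
        apgProfit q F η k1 b1 p_s p_c R p ≤ apgProfit q F η k1 b1 p_s p_c R s.1)) ∧
    (∀ s : ℝ × (ι → ℝ),
      (s.1 ∈ Icc p_m p_c ∧ (∀ i, s.2 i ∈ Icc (0:ℝ) 1) ∧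
        (∀ i, ∀ β ∈ Icc (0:ℝ) 1,
          cchpU q (F i) (η i) (k1 i) (b1 i) (c i) s.1 β
            ≤ cchpU q (F i) (η i) (k1 i) (b1 i) (c i) s.1 (s.2 i)) ∧
        (∀ p ∈ Icc p_m p_c,
          apgProfit q F η k1 b1 p_s p_c R p ≤ apgProfit q F η k1 b1 p_s p_c R s.1)) →
      ∀ i, s.2 i = (1 / (q * F i * η i)) * (k1 i / s.1 - 1 / b1 i)) :=
  stmt_10_general q hq F η k1 b1 c hF hη hk1pos hb1pos p_m p_c p_s R hpm hmc hb1 hk1lo hk1hi
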